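/- arXiv:2303.02327 — 5 statements merged into one kernel-verified Lean document; each statement's English description precedes it below -/
import Mathlib

section
/- For every natural numbers n and k, the matrix product of P̂ and B is the identity: Σ_{j=0}^{n} P̂_{nj} · B_{jk} = 1 if n = k and = 0 if n ≠ k; likewise Σ_{j=0}^{n} B_{nj} · P̂_{jk} = 1 if n = k and = 0 otherwise. In other words, B is the (two-sided) inverse of the lower-triangular matrix P̂. -/
open Finset Filter Topology

/-- The Pascal fractional difference matrix `P̂ = P̂(τ)`. -/
noncomputable def Phat (τ : ℝ) (n k : ℕ) : ℝ :=
  if k ≤ n then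
    ∑ i ∈ Finset.Icc k n,
      (-1 : ℝ) ^ (i - k) * (n.choose (n - i)) * Real.Gamma (τ + 1) /
        (((i - k).factorial : ℝ) * Real.Gamma (τ - i + k + 1))
  else 0

/-- The matrix `B = B(τ)` (the inverse of `P̂`). -/
noncomputable def Bmat (τ : ℝ) (n k : ℕ) : ℝ :=
  if k ≤ n then
    ∑ j ∈ Finset.Icc k n,
      (-1 : ℝ) ^ (n - k) * (j.choose (j - k)) * Real.Gamma (-τ + 1) /
        (((n - j).factorial : ℝ) * Real.Gamma (-τ - n + j + 1))
  else 0

/-- The `P̂`-transform of a sequence `x`: `(P̂x)_n = Σ_{k=0}^n P̂_{nk} x_k`. -/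
noncomputable def PhatT (τ : ℝ) (x : ℕ → ℝ) (n : ℕ) : ℝ :=
  ∑ k ∈ Finset.range (n + 1), Phat τ n k * x k

/-- The space `ℓ_p(P̂)`: sequences whose `P̂`-transform is in `ℓ_p`. -/
def lpPhatSet (τ p : ℝ) : Set (ℕ → ℝ) :=
  {x | Summable fun n => |PhatT τ x n| ^ p}

/-- The norm of `ℓ_p(P̂)`. -/
noncomputable def lpPhatNorm (τ p : ℝ) (x : ℕ → ℝ) : ℝ :=
  (∑' n, |PhatT τ x n| ^ p) ^ (1 / p)

namespace PascalInverseAux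

open Polynomial

/-- Lower-triangular Toeplitz matrix of signed generalized binomial coefficients. -/
noncomputable def D (x : ℝ) (n k : ℕ) : ℝ :=
  if k ≤ n then (-1 : ℝ) ^ (n - k) * Ring.choose x (n - k) else 0

/-- The Pascal matrix. -/
noncomputable def P (n k : ℕ) : ℝ := if k ≤ n then (n.choose k : ℝ) else 0

/-- The signed Pascal matrix (inverse of `P`). -/
noncomputable def Q (n k : ℕ) : ℝ :=
  if k ≤ n then (-1 : ℝ) ^ (n - k) * (n.choose k : ℝ) else 0

/-- Kronecker delta. -/
noncomputable def delta (n k : ℕ) : ℝ := if n = k then 1 else 0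

/-- Truncated matrix product. -/
noncomputable def tmul (f g : ℕ → ℕ → ℝ) (n k : ℕ) : ℝ :=
  ∑ j ∈ Finset.range (n + 1), f n j * g j k

/-- Lower triangularity. -/
def LT (f : ℕ → ℕ → ℝ) : Prop := ∀ ⦃n k : ℕ⦄, n < k → f n k = 0

lemma LT_D (x : ℝ) : LT (D x) := fun _ _ h => if_neg (not_le.mpr h)
lemma LT_P : LT P := fun _ _ h => if_neg (not_le.mpr h)
lemma LT_Q : LT Q := fun _ _ h => if_neg (not_le.mpr h)

lemma tmul_congr_left {f f' g : ℕ → ℕ → ℝ} (h : ∀ a b, f a b = f' a b) (n k : ℕ) :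
    tmul f g n k = tmul f' g n k := by
  unfold tmul; exact Finset.sum_congr rfl fun j _ => by rw [h]

lemma tmul_congr_right {f g g' : ℕ → ℕ → ℝ} (h : ∀ a b, g a b = g' a b) (n k : ℕ) :
    tmul f g n k = tmul f g' n k := by
  unfold tmul; exact Finset.sum_congr rfl fun j _ => by rw [h]

lemma tmul_assoc {f g h : ℕ → ℕ → ℝ} (hg : LT g) (n k : ℕ) :
    tmul (tmul f g) h n k = tmul f (tmul g h) n k := by
  unfold tmul
  simp only [Finset.sum_mul, Finset.mul_sum, mul_assoc]
  rw [Finset.sum_comm]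
  refine Finset.sum_congr rfl fun i hi => ?_
  rw [Finset.mem_range] at hi
  symm
  apply Finset.sum_subset
  · intro j hj; rw [Finset.mem_range] at *; omega
  · intro j _ hj
    rw [Finset.mem_range] at hj
    rw [hg (by omega : i < j), zero_mul, mul_zero]

lemma tmul_delta {f : ℕ → ℕ → ℝ} (hf : LT f) (n k : ℕ) : tmul f delta n k = f n k := by
  unfold tmul delta
  simp only [mul_ite, mul_one, mul_zero]
  rw [Finset.sum_ite_eq' (Finset.range (n + 1)) k (fun j => f n j)]
  by_cases h : k ∈ Finset.range (n + 1)
  · rw [if_pos h]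
  · rw [if_neg h]
    rw [Finset.mem_range] at h
    exact (hf (by omega)).symm

lemma delta_tmul (g : ℕ → ℕ → ℝ) (n k : ℕ) : tmul delta g n k = g n k := by
  unfold tmul delta
  simp only [ite_mul, one_mul, zero_mul]
  rw [Finset.sum_ite_eq (Finset.range (n + 1)) n (fun j => g j k),
    if_pos (Finset.self_mem_range_succ n)]

lemma desc_smeval_eq_eval (x : ℝ) (m : ℕ) :
    (descPochhammer ℤ m).smeval x = (descPochhammer ℝ m).eval x := by
  induction m with
  | zero => simp [descPochhammer_zero, Polynomial.smeval_one]
  | succ m ih =>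
    rw [descPochhammer_succ_right, descPochhammer_succ_right, Polynomial.smeval_mul,
      Polynomial.eval_mul, ih, Polynomial.smeval_sub, Polynomial.eval_sub,
      Polynomial.smeval_X, Polynomial.eval_X, Polynomial.smeval_natCast, Polynomial.eval_natCast]
    simp

lemma choose_eq_desc (x : ℝ) (m : ℕ) :
    (m.factorial : ℝ) * Ring.choose x m = (descPochhammer ℝ m).eval x := by
  rw [← desc_smeval_eq_eval, Ring.descPochhammer_eq_factorial_smul_choose, nsmul_eq_mul]

lemma gamma_desc {x : ℝ} (hx : ∀ z : ℤ, x ≠ (z : ℝ)) (m : ℕ) :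
    Real.Gamma (x + 1) = (descPochhammer ℝ m).eval x * Real.Gamma (x - m + 1) := by
  induction m with
  | zero => simp [descPochhammer_zero]
  | succ m ih =>
    have h1 : x - (m : ℝ) ≠ 0 := by
      have := hx m
      intro h
      apply this
      push_cast
      linarith
    have h2 : x - ((m + 1 : ℕ) : ℝ) + 1 = x - m := by push_cast; ring
    rw [descPochhammer_succ_eval, h2,
      show Real.Gamma (x - (m : ℝ)) = Real.Gamma (x - m + 1) / (x - m) by
        rw [Real.Gamma_add_one h1]; field_simp]
    rw [ih]
    field_simp

lemma gamma_ratio {x : ℝ} (hx : ∀ z : ℤ, x ≠ (z : ℝ)) (m : ℕ) :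
    Real.Gamma (x + 1) / ((m.factorial : ℝ) * Real.Gamma (x - m + 1)) = Ring.choose x m := by
  have hΓ : Real.Gamma (x - m + 1) ≠ 0 := by
    apply Real.Gamma_ne_zero
    intro j h
    apply hx ((m : ℤ) - 1 - j)
    push_cast
    linarith
  have hf : (m.factorial : ℝ) ≠ 0 := Nat.cast_ne_zero.mpr (Nat.factorial_ne_zero m)
  rw [gamma_desc hx m, ← choose_eq_desc]
  field_simp

lemma choose_add' (x y : ℝ) (s : ℕ) :
    Ring.choose (x + y) s =
      ∑ m ∈ Finset.range (s + 1), Ring.choose x (s - m) * Ring.choose y m := by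
  rw [add_comm x y, Ring.add_choose_eq s (Commute.all y x),
    Finset.Nat.sum_antidiagonal_eq_sum_range_succ_mk]
  exact Finset.sum_congr rfl fun m _ => mul_comm _ _

lemma sum_range_of_triangular {f g : ℕ → ℕ → ℝ} (hg : LT g) (n k : ℕ) (hkn : k ≤ n) :
    tmul f g n k = ∑ j ∈ Finset.Icc k n, f n j * g j k := by
  unfold tmul
  symm
  apply Finset.sum_subset
  · intro j hj
    rw [Finset.mem_Icc] at hj; rw [Finset.mem_range]; omega
  · intro j hj hj2
    rw [Finset.mem_range] at hj
    rw [Finset.mem_Icc] at hj2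
    rw [hg (by omega : j < k), mul_zero]

lemma tmul_triangular_zero {f g : ℕ → ℕ → ℝ} (hg : LT g) {n k : ℕ} (hkn : ¬ k ≤ n) :
    tmul f g n k = 0 := by
  unfold tmul
  apply Finset.sum_eq_zero
  intro j hj
  rw [Finset.mem_range] at hj
  rw [hg (by omega : j < k), mul_zero]

lemma D_mul (x y : ℝ) (n k : ℕ) : tmul (D x) (D y) n k = D (x + y) n k := by
  by_cases hkn : k ≤ n
  · rw [sum_range_of_triangular (LT_D y) n k hkn]
    rw [← Finset.Ico_add_one_right_eq_Icc, Finset.sum_Ico_eq_sum_range]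
    have hs : n + 1 - k = (n - k) + 1 := by omega
    rw [hs]
    rw [D, if_pos hkn, choose_add' x y (n - k), Finset.mul_sum]
    refine Finset.sum_congr rfl fun m hm => ?_
    rw [Finset.mem_range] at hm
    rw [D, D, if_pos (by omega : k + m ≤ n), if_pos (by omega : k ≤ k + m)]
    have h1 : n - (k + m) = n - k - m := by omega
    have h2 : k + m - k = m := by omega
    rw [h1, h2]
    have h3 : (-1 : ℝ) ^ (n - k) = (-1) ^ (n - k - m) * (-1) ^ m := by
      rw [← pow_add]; congr 1; omega
    rw [h3]; ring
  · rw [tmul_triangular_zero (LT_D y) hkn, D, if_neg hkn]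

lemma D_zero (n k : ℕ) : D 0 n k = delta n k := by
  unfold D delta
  by_cases h : k ≤ n
  · by_cases h2 : n = k
    · subst h2
      simp [Ring.choose_zero_right]
    · have h3 : n - k = (n - k - 1) + 1 := by omega
      rw [if_pos h, if_neg h2, h3, Ring.choose_zero_succ, mul_zero]
  · rw [if_neg h, if_neg (by omega : ¬ n = k)]

lemma alt_sum (s : ℕ) :
    ∑ m ∈ Finset.range (s + 1), (-1 : ℝ) ^ m * (s.choose m : ℝ) =
      if s = 0 then 1 else 0 := by
  have h := Int.alternating_sum_range_choose (n := s)
  have h2 := congrArg (fun z : ℤ => (z : ℝ)) h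
  simp only [Int.cast_sum, Int.cast_mul, Int.cast_pow, Int.cast_neg, Int.cast_one,
    Int.cast_natCast, apply_ite (fun z : ℤ => (z : ℝ)), Int.cast_zero] at h2
  exact h2

lemma PQ (n k : ℕ) : tmul P Q n k = delta n k := by
  by_cases hkn : k ≤ n
  · rw [sum_range_of_triangular LT_Q n k hkn, ← Finset.Ico_add_one_right_eq_Icc,
      Finset.sum_Ico_eq_sum_range, (by omega : n + 1 - k = (n - k) + 1)]
    have hterm : ∀ m ∈ Finset.range ((n - k) + 1),
        P n (k + m) * Q (k + m) k =
          (n.choose k : ℝ) * ((-1) ^ m * ((n - k).choose m : ℝ)) := by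
      intro m hm
      rw [Finset.mem_range] at hm
      rw [P, Q, if_pos (by omega : k + m ≤ n), if_pos (by omega : k ≤ k + m),
        (by omega : k + m - k = m)]
      have hc := Nat.choose_mul (n := n) (by omega : k ≤ k + m)
      have hc' : n.choose (k + m) * (k + m).choose k =
          n.choose k * (n - k).choose m := by
        rw [hc, Nat.add_sub_cancel_left]
      have hc2 : (n.choose (k + m) : ℝ) * ((k + m).choose k : ℝ) =
          (n.choose k : ℝ) * ((n - k).choose m : ℝ) := by
        exact_mod_cast congrArg (Nat.cast (R := ℝ)) hc'
      calc (n.choose (k + m) : ℝ) * ((-1) ^ m * ((k + m).choose k : ℝ))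
          = ((n.choose (k + m) : ℝ) * ((k + m).choose k : ℝ)) * (-1) ^ m := by ring
        _ = ((n.choose k : ℝ) * ((n - k).choose m : ℝ)) * (-1) ^ m := by rw [hc2]
        _ = (n.choose k : ℝ) * ((-1) ^ m * ((n - k).choose m : ℝ)) := by ring
    rw [Finset.sum_congr rfl hterm, ← Finset.mul_sum, alt_sum]
    unfold delta
    by_cases h2 : n = k
    · subst h2; simp
    · rw [if_neg (by omega : ¬ n - k = 0), if_neg h2, mul_zero]
  · rw [tmul_triangular_zero LT_Q hkn, delta, if_neg (by omega : ¬ n = k)]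

lemma QP (n k : ℕ) : tmul Q P n k = delta n k := by
  by_cases hkn : k ≤ n
  · rw [sum_range_of_triangular LT_P n k hkn, ← Finset.Ico_add_one_right_eq_Icc,
      Finset.sum_Ico_eq_sum_range, (by omega : n + 1 - k = (n - k) + 1)]
    have hterm : ∀ m ∈ Finset.range ((n - k) + 1),
        Q n (k + m) * P (k + m) k =
          ((-1) ^ (n - k) * (n.choose k : ℝ)) * ((-1) ^ m * ((n - k).choose m : ℝ)) := by
      intro m hm
      rw [Finset.mem_range] at hm
      rw [P, Q, if_pos (by omega : k + m ≤ n), if_pos (by omega : k ≤ k + m)]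
      have hc := Nat.choose_mul (n := n) (by omega : k ≤ k + m)
      have hc' : n.choose (k + m) * (k + m).choose k =
          n.choose k * (n - k).choose m := by
        rw [hc, Nat.add_sub_cancel_left]
      have hc2 : (n.choose (k + m) : ℝ) * ((k + m).choose k : ℝ) =
          (n.choose k : ℝ) * ((n - k).choose m : ℝ) := by
        exact_mod_cast congrArg (Nat.cast (R := ℝ)) hc'
      have hsign : (-1 : ℝ) ^ (n - (k + m)) = (-1) ^ (n - k) * (-1) ^ m := by
        rw [← pow_add, show n - k + m = n - (k + m) + (m + m) from by omega,
          pow_add, pow_add, ← mul_pow]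
        norm_num
      calc (-1 : ℝ) ^ (n - (k + m)) * (n.choose (k + m) : ℝ) * ((k + m).choose k : ℝ)
          = (-1 : ℝ) ^ (n - (k + m)) * ((n.choose (k + m) : ℝ) * ((k + m).choose k : ℝ)) := by
            ring
        _ = ((-1) ^ (n - k) * (-1) ^ m) * ((n.choose k : ℝ) * ((n - k).choose m : ℝ)) := by
            rw [hc2, hsign]
        _ = ((-1) ^ (n - k) * (n.choose k : ℝ)) * ((-1) ^ m * ((n - k).choose m : ℝ)) := by
            ring
    rw [Finset.sum_congr rfl hterm, ← Finset.mul_sum, alt_sum]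
    unfold delta
    by_cases h2 : n = k
    · subst h2; simp
    · rw [if_neg (by omega : ¬ n - k = 0), if_neg h2, mul_zero]
  · rw [tmul_triangular_zero LT_P hkn, delta, if_neg (by omega : ¬ n = k)]

lemma Phat_eq (τ : ℝ) (hτ : ∀ z : ℤ, τ ≠ (z : ℝ)) (n k : ℕ) :
    Phat τ n k = tmul P (D τ) n k := by
  by_cases hkn : k ≤ n
  · rw [Phat, if_pos hkn, sum_range_of_triangular (LT_D τ) n k hkn]
    refine Finset.sum_congr rfl fun i hi => ?_
    rw [Finset.mem_Icc] at hi
    rw [P, D, if_pos hi.2, if_pos hi.1, Nat.choose_symm hi.2]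
    rw [← gamma_ratio hτ (i - k), Nat.cast_sub hi.1]
    rw [show τ - ((i : ℝ) - (k : ℝ)) + 1 = τ - i + k + 1 by ring]
    ring
  · rw [Phat, if_neg hkn, tmul_triangular_zero (LT_D τ) hkn]

lemma Bmat_eq (τ : ℝ) (hτ : ∀ z : ℤ, τ ≠ (z : ℝ)) (n k : ℕ) :
    Bmat τ n k = tmul (D (-τ)) Q n k := by
  have hτ' : ∀ z : ℤ, -τ ≠ (z : ℝ) := by
    intro z h
    apply hτ (-z)
    push_cast
    linarith
  by_cases hkn : k ≤ n
  · rw [Bmat, if_pos hkn, sum_range_of_triangular LT_Q n k hkn]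
    refine Finset.sum_congr rfl fun j hj => ?_
    rw [Finset.mem_Icc] at hj
    rw [D, Q, if_pos hj.2, if_pos hj.1, Nat.choose_symm hj.1]
    rw [← gamma_ratio hτ' (n - j), Nat.cast_sub hj.2]
    rw [show -τ - ((n : ℝ) - (j : ℝ)) + 1 = -τ - n + j + 1 by ring]
    have hsign : (-1 : ℝ) ^ (n - k) = (-1) ^ (n - j) * (-1) ^ (j - k) := by
      rw [← pow_add]; congr 1; omega
    rw [hsign]
    ring
  · rw [Bmat, if_neg hkn, tmul_triangular_zero LT_Q hkn]

end PascalInverseAux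

/-- `B` is the two-sided inverse of the lower-triangular matrix `P̂`. -/
theorem pascal_inverse (τ : ℝ) (hτ : ∀ z : ℤ, τ ≠ (z : ℝ)) (n k : ℕ) :
    (∑ j ∈ Finset.range (n + 1), Phat τ n j * Bmat τ j k) =
      (if n = k then (1 : ℝ) else 0) ∧
    (∑ j ∈ Finset.range (n + 1), Bmat τ n j * Phat τ j k) =
      (if n = k then (1 : ℝ) else 0) := by
  open PascalInverseAux in
  constructor
  · show tmul (Phat τ) (Bmat τ) n k = _
    calc tmul (Phat τ) (Bmat τ) n k
        = tmul (tmul P (D τ)) (Bmat τ) n k := tmul_congr_left (Phat_eq τ hτ) n k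
      _ = tmul (tmul P (D τ)) (tmul (D (-τ)) Q) n k := tmul_congr_right (Bmat_eq τ hτ) n k
      _ = tmul P (tmul (D τ) (tmul (D (-τ)) Q)) n k := tmul_assoc (LT_D τ) n k
      _ = tmul P Q n k := by
          refine tmul_congr_right (fun a b => ?_) n k
          rw [← tmul_assoc (LT_D (-τ)) a b,
            tmul_congr_left (fun c d => by
              rw [D_mul, add_neg_cancel, D_zero] : ∀ c d,
                tmul (D τ) (D (-τ)) c d = delta c d) a b,
            delta_tmul]
      _ = delta n k := PQ n k
  · show tmul (Bmat τ) (Phat τ) n k = _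
    calc tmul (Bmat τ) (Phat τ) n k
        = tmul (tmul (D (-τ)) Q) (Phat τ) n k := tmul_congr_left (Bmat_eq τ hτ) n k
      _ = tmul (tmul (D (-τ)) Q) (tmul P (D τ)) n k := tmul_congr_right (Phat_eq τ hτ) n k
      _ = tmul (D (-τ)) (tmul Q (tmul P (D τ))) n k := tmul_assoc LT_Q n k
      _ = tmul (D (-τ)) (D τ) n k := by
          refine tmul_congr_right (fun a b => ?_) n k
          rw [← tmul_assoc LT_P a b,
            tmul_congr_left (fun c d => QP c d) a b,
            delta_tmul]
      _ = delta n k := by rw [D_mul, neg_add_cancel, D_zero]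
end

section
/- For every natural numbers n and k, Σ_{j=k}^{n} Δ^{(τ)}_{nj} · Δ^{(−τ)}_{jk} = 1 if n = k and = 0 if n ≠ k; that is, the lower-triangular fractional difference matrices Δ^{(τ)} and Δ^{(−τ)} are mutually inverse. -/
open Finset Filter Topology

/-- The fractional difference matrix `Δ^{(τ)}`. -/
noncomputable def DeltaMat (τ : ℝ) (n k : ℕ) : ℝ :=
  if k ≤ n then
    (-1 : ℝ) ^ (n - k) * Real.Gamma (τ + 1) /
      (((n - k).factorial : ℝ) * Real.Gamma (τ - n + k + 1))
  else 0

private lemma gamma_desc (τ : ℝ) (hτ : ∀ z : ℤ, τ ≠ (z : ℝ)) (m : ℕ) :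
    Real.Gamma (τ + 1) =
      Polynomial.smeval (descPochhammer ℤ m) τ * Real.Gamma (τ - m + 1) := by
  induction m with
  | zero => simp [descPochhammer_zero]
  | succ m ih =>
    have hne : τ - m ≠ 0 := by
      intro h
      exact hτ m (by push_cast; linarith)
    have hG : Real.Gamma (τ - m + 1) = (τ - m) * Real.Gamma (τ - m) := by
      exact Real.Gamma_add_one hne
    rw [descPochhammer_succ_right]
    rw [Polynomial.smeval_mul, Polynomial.smeval_sub, Polynomial.smeval_X,
      Polynomial.smeval_natCast]
    have : τ - (m + 1 : ℕ) + 1 = τ - m := by push_cast; ring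
    rw [this, ih, hG]
    simp only [pow_one, pow_zero, nsmul_eq_mul, one_mul]
    ring

private lemma gamma_sub_ne (τ : ℝ) (hτ : ∀ z : ℤ, τ ≠ (z : ℝ)) (m : ℕ) :
    Real.Gamma (τ - m + 1) ≠ 0 := by
  apply Real.Gamma_ne_zero
  intro j h
  exact hτ (m - 1 - j) (by push_cast; linarith)

private lemma deltaMat_eq_choose (τ : ℝ) (hτ : ∀ z : ℤ, τ ≠ (z : ℝ)) {n k : ℕ}
    (hkn : k ≤ n) : DeltaMat τ n k = (-1 : ℝ) ^ (n - k) * Ring.choose τ (n - k) := by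
  set m := n - k with hm
  have hnk : τ - n + k + 1 = τ - m + 1 := by
    rw [hm]; push_cast [hkn]; ring
  have hdesc : Polynomial.smeval (descPochhammer ℤ m) τ =
      (m.factorial : ℝ) * Ring.choose τ m := by
    rw [Ring.descPochhammer_eq_factorial_smul_choose, nsmul_eq_mul]
  rw [DeltaMat, if_pos hkn, hnk, gamma_desc τ hτ m, hdesc]
  have h1 : (m.factorial : ℝ) ≠ 0 := Nat.cast_ne_zero.mpr m.factorial_ne_zero
  have h2 := gamma_sub_ne τ hτ m
  field_simp
  ring

/-- the matrices `Δ^{(τ)}` and `Δ^{(−τ)}` are mutually inverse. -/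
theorem delta_inverse (τ : ℝ) (hτ : ∀ z : ℤ, τ ≠ (z : ℝ)) (n k : ℕ) :
    (∑ j ∈ Finset.Icc k n, DeltaMat τ n j * DeltaMat (-τ) j k) =
      (if n = k then (1 : ℝ) else 0) := by
  have hτ' : ∀ z : ℤ, -τ ≠ (z : ℝ) := by
    intro z h
    exact hτ (-z) (by push_cast; linarith)
  by_cases hkn : k ≤ n
  · set N := n - k with hN
    have key : Ring.choose ((-τ) + τ) N =
        ∑ ij ∈ antidiagonal N, Ring.choose (-τ) ij.1 * Ring.choose τ ij.2 :=
      Ring.add_choose_eq N (Commute.all _ _)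
    rw [neg_add_cancel, Ring.choose_zero_ite] at key
    have hIcc : Finset.Icc k n = Finset.Ico k (n + 1) := by
      rw [Finset.Ico_add_one_right_eq_Icc]
    rw [hIcc, Finset.sum_Ico_eq_sum_range]
    have hrange : n + 1 - k = N + 1 := by omega
    rw [hrange]
    have hterm : ∀ i ∈ Finset.range (N + 1),
        DeltaMat τ n (k + i) * DeltaMat (-τ) (k + i) k =
          (-1 : ℝ) ^ N * (Ring.choose (-τ) i * Ring.choose τ (N - i)) := by
      intro i hi
      have hiN : i ≤ N := Nat.lt_succ_iff.mp (Finset.mem_range.mp hi)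
      have h1 : k + i ≤ n := by omega
      have h2 : k ≤ k + i := Nat.le_add_right k i
      rw [deltaMat_eq_choose τ hτ h1, deltaMat_eq_choose (-τ) hτ' h2]
      have e1 : n - (k + i) = N - i := by omega
      have e2 : k + i - k = i := by omega
      rw [e1, e2]
      have : (-1 : ℝ) ^ (N - i) * (-1 : ℝ) ^ i = (-1 : ℝ) ^ N := by
        rw [← pow_add]; congr 1; omega
      calc (-1 : ℝ) ^ (N - i) * Ring.choose τ (N - i) *
            ((-1 : ℝ) ^ i * Ring.choose (-τ) i)
          = ((-1 : ℝ) ^ (N - i) * (-1 : ℝ) ^ i) *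
            (Ring.choose (-τ) i * Ring.choose τ (N - i)) := by ring
        _ = (-1 : ℝ) ^ N * (Ring.choose (-τ) i * Ring.choose τ (N - i)) := by rw [this]
    rw [Finset.sum_congr rfl hterm, ← Finset.mul_sum,
      ← Finset.Nat.sum_antidiagonal_eq_sum_range_succ_mk
        (fun ij => Ring.choose (-τ) ij.1 * Ring.choose τ ij.2), ← key]
    by_cases hNk : N = 0
    · have : n = k := by omega
      simp [hNk, this]
    · have : n ≠ k := by omega
      simp [hNk, this]
  · have : Finset.Icc k n = ∅ := Finset.Icc_eq_empty hkn
    rw [this]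
    have : n ≠ k := by omega
    simp [this]
end

section
/- For 1 ≤ p < ∞, the space ℓ_p(P̂) equipped with the norm ‖x‖_{ℓ_p(P̂)} = (Σ_n |(P̂x)_n|^p)^{1/p} is a BK-space: it is a complete normed linear space (a Banach space) in which every coordinate functional x ↦ x_k is continuous, i.e., convergence in this norm implies coordinatewise convergence. -/
open Finset Filter Topology

lemma myGamma_ne_zero {τ : ℝ} (hτ : ∀ z : ℤ, τ ≠ (z : ℝ)) : Real.Gamma (τ + 1) ≠ 0 := by
  apply Real.Gamma_ne_zero
  intro m h
  exact hτ (-(m : ℤ) - 1) (by push_cast; linarith)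

lemma Phat_diag {τ : ℝ} (h : Real.Gamma (τ + 1) ≠ 0) (n : ℕ) : Phat τ n n = 1 := by
  have : (τ - (n : ℝ) + n + 1) = τ + 1 := by ring
  simp [Phat, Finset.Icc_self, this, div_self h]

lemma PhatT_split {τ : ℝ} (h : Real.Gamma (τ + 1) ≠ 0) (x : ℕ → ℝ) (n : ℕ) :
    PhatT τ x n = (∑ k ∈ Finset.range n, Phat τ n k * x k) + x n := by
  rw [PhatT, Finset.sum_range_succ, Phat_diag h, one_mul]

/-- The inverse transform, defined by forward substitution. -/
noncomputable def invT (τ : ℝ) (y : ℕ → ℝ) : ℕ → ℝ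
  | n => y n - ∑ k ∈ (Finset.range n).attach, Phat τ n ↑k * invT τ y ↑k
decreasing_by exact Finset.mem_range.mp k.2

lemma PhatT_invT {τ : ℝ} (h : Real.Gamma (τ + 1) ≠ 0) (y : ℕ → ℝ) (n : ℕ) :
    PhatT τ (invT τ y) n = y n := by
  rw [PhatT_split h, invT]
  rw [← Finset.sum_attach (Finset.range n) (fun k => Phat τ n k * invT τ y k)]
  ring

lemma PhatT_add (τ : ℝ) (x y : ℕ → ℝ) : PhatT τ (x + y) = PhatT τ x + PhatT τ y := by
  funext n
  simp [PhatT, mul_add, Finset.sum_add_distrib]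

lemma PhatT_smul (τ : ℝ) (c : ℝ) (x : ℕ → ℝ) : PhatT τ (c • x) = c • PhatT τ x := by
  funext n
  simp [PhatT, Finset.mul_sum]
  congr 1; funext k; ring

lemma PhatT_zero (τ : ℝ) : PhatT τ (0 : ℕ → ℝ) = 0 := by
  funext n; simp [PhatT]

lemma PhatT_sub (τ : ℝ) (x y : ℕ → ℝ) : PhatT τ (x - y) = PhatT τ x - PhatT τ y := by
  have := PhatT_add τ (x - y) y
  simp at this
  rw [eq_sub_iff_add_eq, ← this]

lemma PhatT_eq_zero {τ : ℝ} (h : Real.Gamma (τ + 1) ≠ 0) {x : ℕ → ℝ}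
    (hx : ∀ n, PhatT τ x n = 0) : x = 0 := by
  funext n
  induction n using Nat.strong_induction_on with
  | _ n ih =>
    have := PhatT_split h x n
    rw [hx n] at this
    have hsum : ∑ k ∈ Finset.range n, Phat τ n k * x k = 0 := by
      apply Finset.sum_eq_zero
      intro k hk
      rw [ih k (Finset.mem_range.mp hk)]; simp
    simpa [hsum] using this.symm

/-- for `1 ≤ p < ∞`, `ℓ_p(P̂)` with the norm
`‖x‖ = (Σ_n |(P̂x)_n|^p)^{1/p}` is a BK-space: a complete normed linear space
in which every coordinate functional is continuous. -/
theorem lpPhat_BK_space (τ : ℝ) (hτ : ∀ z : ℤ, τ ≠ (z : ℝ)) (p : ℝ) (hp : 1 ≤ p) :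
    -- `ℓ_p(P̂)` is a linear space:
    ((0 : ℕ → ℝ) ∈ lpPhatSet τ p) ∧
    (∀ x y : ℕ → ℝ, x ∈ lpPhatSet τ p → y ∈ lpPhatSet τ p → x + y ∈ lpPhatSet τ p) ∧
    (∀ (c : ℝ) (x : ℕ → ℝ), x ∈ lpPhatSet τ p → c • x ∈ lpPhatSet τ p) ∧
    -- the norm axioms hold:
    (∀ x ∈ lpPhatSet τ p, 0 ≤ lpPhatNorm τ p x) ∧
    (∀ x ∈ lpPhatSet τ p, (lpPhatNorm τ p x = 0 ↔ x = 0)) ∧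
    (∀ (c : ℝ), ∀ x ∈ lpPhatSet τ p, lpPhatNorm τ p (c • x) = |c| * lpPhatNorm τ p x) ∧
    (∀ x ∈ lpPhatSet τ p, ∀ y ∈ lpPhatSet τ p,
      lpPhatNorm τ p (x + y) ≤ lpPhatNorm τ p x + lpPhatNorm τ p y) ∧
    -- completeness: every Cauchy sequence in `ℓ_p(P̂)` converges in norm to a member:
    (∀ F : ℕ → (ℕ → ℝ), (∀ m, F m ∈ lpPhatSet τ p) →
      (∀ ε > (0 : ℝ), ∃ M, ∀ m ≥ M, ∀ l ≥ M, lpPhatNorm τ p (F m - F l) < ε) →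
      ∃ x ∈ lpPhatSet τ p,
        Filter.Tendsto (fun m => lpPhatNorm τ p (F m - x)) Filter.atTop (nhds 0)) ∧
    -- coordinates are continuous: norm convergence implies coordinatewise convergence:
    (∀ F : ℕ → (ℕ → ℝ), ∀ x : ℕ → ℝ, (∀ m, F m ∈ lpPhatSet τ p) → x ∈ lpPhatSet τ p →
      Filter.Tendsto (fun m => lpPhatNorm τ p (F m - x)) Filter.atTop (nhds 0) →
      ∀ k, Filter.Tendsto (fun m => F m k) Filter.atTop (nhds (x k))) := by
  have hΓ := myGamma_ne_zero hτ
  have hp0 : (0 : ℝ) < p := lt_of_lt_of_le one_pos hp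
  set P : ENNReal := ENNReal.ofReal p with hPdef
  have hPt : P.toReal = p := ENNReal.toReal_ofReal hp0.le
  haveI : Fact (1 ≤ P) := ⟨ENNReal.one_le_ofReal.mpr hp⟩
  have hptne : 0 < P.toReal := by rw [hPt]; exact hp0
  have hPne0 : P ≠ 0 := by
    simp only [hPdef, ne_eq, ENNReal.ofReal_eq_zero, not_le]; exact hp0
  -- membership translation
  have mem_iff : ∀ x : ℕ → ℝ, x ∈ lpPhatSet τ p ↔ Memℓp (PhatT τ x) P := by
    intro x
    rw [memℓp_gen_iff hptne]
    simp only [lpPhatSet, Set.mem_setOf_eq, Real.norm_eq_abs, hPt]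
  -- the norm translation
  have norm_eq : ∀ (f : lp (fun _ : ℕ => ℝ) P) (x : ℕ → ℝ), ⇑f = PhatT τ x →
      lpPhatNorm τ p x = ‖f‖ := by
    intro f x hfx
    rw [lp.norm_eq_tsum_rpow hptne, lpPhatNorm, hPt, hfx]
    simp [Real.norm_eq_abs]
  -- canonical lift
  have Lmem : ∀ x (_ : x ∈ lpPhatSet τ p), Memℓp (PhatT τ x) P := fun x hx => (mem_iff x).mp hx
  -- closure under subtraction
  have hzero : (0 : ℕ → ℝ) ∈ lpPhatSet τ p := by
    rw [mem_iff, PhatT_zero]; exact zero_memℓp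
  have hadd : ∀ x y : ℕ → ℝ, x ∈ lpPhatSet τ p → y ∈ lpPhatSet τ p →
      x + y ∈ lpPhatSet τ p := by
    intro x y hx hy
    rw [mem_iff, PhatT_add]
    exact ((mem_iff x).mp hx).add ((mem_iff y).mp hy)
  have hsmul : ∀ (c : ℝ) (x : ℕ → ℝ), x ∈ lpPhatSet τ p → c • x ∈ lpPhatSet τ p := by
    intro c x hx
    rw [mem_iff, PhatT_smul]
    exact ((mem_iff x).mp hx).const_smul c
  have hsub : ∀ x y : ℕ → ℝ, x ∈ lpPhatSet τ p → y ∈ lpPhatSet τ p →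
      x - y ∈ lpPhatSet τ p := by
    intro x y hx hy
    rw [mem_iff, PhatT_sub]
    exact ((mem_iff x).mp hx).sub ((mem_iff y).mp hy)
  -- coordinate bound
  have coordbound : ∀ x (_ : x ∈ lpPhatSet τ p) (n : ℕ),
      |PhatT τ x n| ≤ lpPhatNorm τ p x := by
    intro x hx n
    have h1 := lp.norm_apply_le_norm hPne0
      (⟨PhatT τ x, Lmem x hx⟩ : lp (fun _ : ℕ => ℝ) P) n
    rw [← norm_eq ⟨PhatT τ x, Lmem x hx⟩ x rfl] at h1
    simpa [Real.norm_eq_abs] using h1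
  refine ⟨hzero, hadd, hsmul, ?_, ?_, ?_, ?_, ?_, ?_⟩
  · -- nonneg
    intro x _
    exact Real.rpow_nonneg
      (tsum_nonneg fun n => Real.rpow_nonneg (abs_nonneg _) _) _
  · -- norm zero iff
    intro x hx
    constructor
    · intro h
      have hS : (∑' n, |PhatT τ x n| ^ p) = 0 := by
        have hSnn : 0 ≤ ∑' n, |PhatT τ x n| ^ p :=
          tsum_nonneg fun n => Real.rpow_nonneg (abs_nonneg _) _
        have := (Real.rpow_eq_zero hSnn (by positivity : (1 : ℝ) / p ≠ 0)).mp h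
        exact this
      apply PhatT_eq_zero hΓ
      intro n
      have hterm : |PhatT τ x n| ^ p ≤ 0 := by
        rw [← hS]
        exact Summable.le_tsum hx n fun m _ => Real.rpow_nonneg (abs_nonneg _) _
      have : |PhatT τ x n| ^ p = 0 :=
        le_antisymm hterm (Real.rpow_nonneg (abs_nonneg _) _)
      have := (Real.rpow_eq_zero (abs_nonneg _) hp0.ne').mp this
      exact abs_eq_zero.mp this
    · intro h
      subst h
      simp only [lpPhatNorm, PhatT_zero, Pi.zero_apply, abs_zero,
        Real.zero_rpow hp0.ne', tsum_zero]
      exact Real.zero_rpow (by positivity)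
  · -- smul norm
    intro c x _
    have h1 : ∀ n, |PhatT τ (c • x) n| ^ p = |c| ^ p * |PhatT τ x n| ^ p := by
      intro n
      rw [PhatT_smul]
      simp only [Pi.smul_apply, smul_eq_mul, abs_mul]
      exact Real.mul_rpow (abs_nonneg _) (abs_nonneg _)
    rw [lpPhatNorm, lpPhatNorm]
    simp only [h1]
    rw [tsum_mul_left,
      Real.mul_rpow (Real.rpow_nonneg (abs_nonneg _) _)
        (tsum_nonneg fun n => Real.rpow_nonneg (abs_nonneg _) _),
      ← Real.rpow_mul (abs_nonneg _), mul_one_div_cancel hp0.ne', Real.rpow_one]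
  · -- triangle
    intro x hx y hy
    have hxy := hadd x y hx hy
    have key : (⟨PhatT τ (x + y), Lmem _ hxy⟩ : lp (fun _ : ℕ => ℝ) P) =
        ⟨PhatT τ x, Lmem x hx⟩ + ⟨PhatT τ y, Lmem y hy⟩ := by
      apply lp.ext
      rw [lp.coeFn_add]
      exact PhatT_add τ x y
    rw [norm_eq _ _ (rfl : ⇑(⟨PhatT τ (x + y), Lmem _ hxy⟩ : lp (fun _ : ℕ => ℝ) P) = _),
      norm_eq ⟨PhatT τ x, Lmem x hx⟩ x rfl, norm_eq ⟨PhatT τ y, Lmem y hy⟩ y rfl, key]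
    exact norm_add_le _ _
  · -- completeness
    intro F hF hC
    set G : ℕ → lp (fun _ : ℕ => ℝ) P := fun m => ⟨PhatT τ (F m), Lmem _ (hF m)⟩ with hG
    have hdist : ∀ m l, dist (G m) (G l) = lpPhatNorm τ p (F m - F l) := by
      intro m l
      rw [dist_eq_norm]
      have : ⇑(G m - G l) = PhatT τ (F m - F l) := by
        rw [lp.coeFn_sub, PhatT_sub]
      rw [norm_eq (G m - G l) (F m - F l) this]
    have hcauchy : CauchySeq G := by
      rw [Metric.cauchySeq_iff]
      intro ε hε
      obtain ⟨M, hM⟩ := hC ε hε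
      exact ⟨M, fun m hm l hl => by rw [hdist]; exact hM m hm l hl⟩
    obtain ⟨f, hf⟩ := cauchySeq_tendsto_of_complete hcauchy
    set x : ℕ → ℝ := invT τ ⇑f with hxdef
    have hPx : PhatT τ x = ⇑f := funext (PhatT_invT hΓ ⇑f)
    have hxmem : x ∈ lpPhatSet τ p := by
      rw [mem_iff, hPx]; exact lp.memℓp f
    refine ⟨x, hxmem, ?_⟩
    have hdist2 : ∀ m, lpPhatNorm τ p (F m - x) = dist (G m) f := by
      intro m
      rw [dist_eq_norm]
      have : ⇑(G m - f) = PhatT τ (F m - x) := by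
        rw [lp.coeFn_sub, PhatT_sub, hPx]
      rw [norm_eq (G m - f) (F m - x) this]
    have := (tendsto_iff_dist_tendsto_zero).mp hf
    exact Tendsto.congr (fun m => (hdist2 m).symm) this
  · -- coordinates continuous
    intro F x hF hx htend k
    have hsubm : ∀ m, F m - x ∈ lpPhatSet τ p := fun m => hsub _ _ (hF m) hx
    have hcoord : ∀ n, Tendsto (fun m => PhatT τ (F m - x) n) atTop (𝓝 0) := by
      intro n
      apply squeeze_zero_norm (fun m => ?_) htend
      rw [Real.norm_eq_abs]
      exact coordbound _ (hsubm m) n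
    have key : ∀ n, Tendsto (fun m => (F m - x) n) atTop (𝓝 0) := by
      intro n
      induction n using Nat.strong_induction_on with
      | _ n ih =>
        have heq : ∀ m, (F m - x) n =
            PhatT τ (F m - x) n - ∑ j ∈ Finset.range n, Phat τ n j * (F m - x) j := by
          intro m
          have := PhatT_split hΓ (F m - x) n
          linarith
        have hsumt : Tendsto
            (fun m => ∑ j ∈ Finset.range n, Phat τ n j * (F m - x) j) atTop (𝓝 0) := by
          have h0 : Tendsto
              (fun m => ∑ j ∈ Finset.range n, Phat τ n j * (F m - x) j) atTop
              (𝓝 (∑ j ∈ Finset.range n, Phat τ n j * 0)) :=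
            tendsto_finset_sum _ fun j hj => ((ih j (Finset.mem_range.mp hj)).const_mul _)
          simpa using h0
        have h2 := (hcoord n).sub hsumt
        rw [sub_zero] at h2
        exact Tendsto.congr (fun m => (heq m).symm) h2
    have h3 := (key k).add (tendsto_const_nhds : Tendsto (fun _ : ℕ => x k) atTop (𝓝 (x k)))
    rw [zero_add] at h3
    exact Tendsto.congr (fun m => by simp) h3
end

section
/- For each fixed k ∈ ℕ, the sequence b^(k) defined by b^(k)_n = B_{nk} satisfies (P̂ b^(k))_n = 1 if n = k and (P̂ b^(k))_n = 0 if n ≠ k; that is, the P̂-transform of b^(k) is the k-th standard unit sequence e^(k). In particular b^(k) ∈ ℓ_p(P̂) for every 1 ≤ p < ∞. -/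
open Finset Filter Topology

/-! ### Auxiliary lemmas -/

noncomputable def dpr (t : ℝ) (m : ℕ) : ℝ := ∏ j ∈ Finset.range m, (t - j)

lemma dpr_succ (t : ℝ) (m : ℕ) : dpr t (m+1) = dpr t m * (t - m) := Finset.prod_range_succ _ _

lemma smeval_dp (t : ℝ) (m : ℕ) : (descPochhammer ℤ m).smeval t = dpr t m := by
  induction m with
  | zero => simp [dpr]
  | succ m ih =>
    rw [descPochhammer_succ_right, Polynomial.smeval_mul, ih, dpr_succ]
    congr 1
    simp [Polynomial.smeval_sub, Polynomial.smeval_X, Polynomial.smeval_natCast]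

lemma gchoose_eq (t : ℝ) (m : ℕ) : Ring.choose t m * m.factorial = dpr t m := by
  rw [← smeval_dp, Ring.descPochhammer_eq_factorial_smul_choose, nsmul_eq_mul, mul_comm]

lemma vander (t : ℝ) (c : ℕ) :
    ∑ a ∈ Finset.range (c+1), Ring.choose (-t) a * Ring.choose t (c - a) =
      if c = 0 then 1 else 0 := by
  have h := Ring.add_choose_eq (r := (-t)) (s := t) c (Commute.all _ _)
  rw [neg_add_cancel, Ring.choose_zero_ite] at h
  rw [h, Finset.Nat.sum_antidiagonal_eq_sum_range_succ_mk]

lemma gamma_ratio (t : ℝ) (ht : ∀ z : ℤ, t ≠ (z : ℝ)) (m : ℕ) :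
    Real.Gamma (t + 1) = dpr t m * Real.Gamma (t - m + 1) := by
  induction m with
  | zero => simp [dpr]
  | succ m ih =>
    have hne : t - m ≠ 0 := fun h => ht m (by push_cast; linarith)
    have key : t - ((m:ℝ) + 1) + 1 = t - m := by ring
    push_cast
    rw [key, ih, Real.Gamma_add_one hne, dpr_succ]
    ring

lemma gamma_ne (t : ℝ) (ht : ∀ z : ℤ, t ≠ (z : ℝ)) (m : ℕ) :
    Real.Gamma (t - m + 1) ≠ 0 := by
  apply Real.Gamma_ne_zero
  intro j h
  exact ht ((m : ℤ) - 1 - j) (by push_cast; linarith)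

lemma gamma_term (t : ℝ) (ht : ∀ z : ℤ, t ≠ (z : ℝ)) (a : ℕ) :
    Real.Gamma (t + 1) / ((a.factorial : ℝ) * Real.Gamma (t - a + 1)) = Ring.choose t a := by
  have hfac : (a.factorial : ℝ) ≠ 0 := Nat.cast_ne_zero.mpr a.factorial_ne_zero
  have hg := gamma_ne t ht a
  rw [gamma_ratio t ht a, ← gchoose_eq]
  field_simp

lemma Phat_eq (τ : ℝ) (hτ : ∀ z : ℤ, τ ≠ (z : ℝ)) {n k : ℕ} (hkn : k ≤ n) :
    Phat τ n k = ∑ i ∈ Finset.Icc k n,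
      (n.choose i : ℝ) * ((-1 : ℝ) ^ (i - k) * Ring.choose τ (i - k)) := by
  rw [Phat, if_pos hkn]
  refine Finset.sum_congr rfl fun i hi => ?_
  rw [Finset.mem_Icc] at hi
  have h1 : τ - i + k + 1 = τ - ((i - k : ℕ) : ℝ) + 1 := by
    rw [Nat.cast_sub hi.1]; ring
  rw [h1, Nat.choose_symm hi.2, ← gamma_term τ hτ (i - k)]
  ring

lemma Bmat_eq (τ : ℝ) (hτ : ∀ z : ℤ, -τ ≠ (z : ℝ)) {m k : ℕ} (hkm : k ≤ m) :
    Bmat τ m k = ∑ j ∈ Finset.Icc k m,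
      ((-1 : ℝ) ^ (m - j) * Ring.choose (-τ) (m - j)) *
        ((-1 : ℝ) ^ (j - k) * (j.choose k : ℝ)) := by
  rw [Bmat, if_pos hkm]
  refine Finset.sum_congr rfl fun j hj => ?_
  rw [Finset.mem_Icc] at hj
  have h1 : -τ - m + j + 1 = -τ - ((m - j : ℕ) : ℝ) + 1 := by
    rw [Nat.cast_sub hj.2]; ring
  have h2 : ((-1 : ℝ)) ^ (m - k) = (-1 : ℝ) ^ (m - j) * (-1 : ℝ) ^ (j - k) := by
    rw [← pow_add]
    congr 1
    omega
  rw [h1, Nat.choose_symm hj.1, h2, ← gamma_term (-τ) hτ (m - j)]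
  ring

lemma sum_Icc_Icc_comm {M : Type*} [AddCommMonoid M] (a b : ℕ) (f : ℕ → ℕ → M) :
    (∑ i ∈ Finset.Icc a b, ∑ j ∈ Finset.Icc i b, f i j) =
      ∑ j ∈ Finset.Icc a b, ∑ i ∈ Finset.Icc a j, f i j := by
  simp_rw [← Finset.Ico_add_one_right_eq_Icc]
  exact Finset.sum_Ico_Ico_comm a (b + 1) f

lemma inner_delta (τ : ℝ) {j i : ℕ} (hji : j ≤ i) :
    ∑ m ∈ Finset.Icc j i,
      ((-1 : ℝ) ^ (i - m) * Ring.choose τ (i - m)) *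
        ((-1 : ℝ) ^ (m - j) * Ring.choose (-τ) (m - j)) =
      if i = j then 1 else 0 := by
  rw [← Finset.Ico_add_one_right_eq_Icc, Finset.sum_Ico_eq_sum_range]
  have hr : i + 1 - j = (i - j) + 1 := by omega
  rw [hr]
  set c := i - j with hc
  have : ∀ a ∈ Finset.range (c + 1),
      ((-1 : ℝ) ^ (i - (j + a)) * Ring.choose τ (i - (j + a))) *
        ((-1 : ℝ) ^ ((j + a) - j) * Ring.choose (-τ) ((j + a) - j)) =
      (-1 : ℝ) ^ c * (Ring.choose (-τ) a * Ring.choose τ (c - a)) := by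
    intro a ha
    rw [Finset.mem_range] at ha
    have e1 : i - (j + a) = c - a := by omega
    have e2 : (j + a) - j = a := by omega
    have e3 : (-1 : ℝ) ^ (c - a) * (-1 : ℝ) ^ a = (-1 : ℝ) ^ c := by
      rw [← pow_add]
      congr 1
      omega
    rw [e1, e2, ← e3]
    ring
  rw [Finset.sum_congr rfl this, ← Finset.mul_sum, vander]
  have : (i = j) ↔ (c = 0) := by omega
  by_cases h : c = 0 <;> simp [h, this]

lemma final_sum (n k : ℕ) (hkn : k ≤ n) :
    ∑ i ∈ Finset.Icc k n, (n.choose i : ℝ) * ((-1 : ℝ) ^ (i - k) * (i.choose k : ℝ)) =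
      if n = k then 1 else 0 := by
  have step : ∀ i ∈ Finset.Icc k n,
      (n.choose i : ℝ) * ((-1 : ℝ) ^ (i - k) * (i.choose k : ℝ)) =
        (n.choose k : ℝ) * ((-1 : ℝ) ^ (i - k) * ((n - k).choose (i - k) : ℝ)) := by
    intro i hi
    rw [Finset.mem_Icc] at hi
    have h := Nat.choose_mul (n := n) hi.1
    have h' : ((n.choose i : ℕ) : ℝ) * ((i.choose k : ℕ) : ℝ) =
        ((n.choose k : ℕ) : ℝ) * (((n - k).choose (i - k) : ℕ) : ℝ) := by
      rw [← Nat.cast_mul, ← Nat.cast_mul, h]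
    linear_combination ((-1 : ℝ) ^ (i - k)) * h'
  rw [Finset.sum_congr rfl step, ← Finset.Ico_add_one_right_eq_Icc, Finset.sum_Ico_eq_sum_range]
  have hr : n + 1 - k = (n - k) + 1 := by omega
  rw [hr]
  have hsimp : ∀ a ∈ Finset.range ((n - k) + 1),
      (n.choose k : ℝ) * ((-1 : ℝ) ^ ((k + a) - k) * (((n - k).choose ((k + a) - k)) : ℝ)) =
        (n.choose k : ℝ) * ((-1 : ℝ) ^ a * (((n - k).choose a) : ℝ)) := by
    intro a _
    have : (k + a) - k = a := by omega
    rw [this]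
  rw [Finset.sum_congr rfl hsimp, ← Finset.mul_sum]
  have hz := Int.alternating_sum_range_choose (n := n - k)
  have hzr : ∑ a ∈ Finset.range ((n - k) + 1), (-1 : ℝ) ^ a * (((n - k).choose a) : ℝ) =
      if n - k = 0 then 1 else 0 := by
    have := congrArg (fun z : ℤ => (z : ℝ)) hz
    push_cast at this
    rw [← this]
  rw [hzr]
  by_cases h : n = k
  · subst h
    simp
  · rw [if_neg h, if_neg (by omega), mul_zero]

/-- for each `k`, the sequence `b^(k)_n = B_{nk}` has `P̂`-transform
equal to the `k`-th standard unit sequence `e^(k)`; in particular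
`b^(k) ∈ ℓ_p(P̂)` for every `1 ≤ p < ∞`. -/
theorem PhatT_basis_seq (τ : ℝ) (hτ : ∀ z : ℤ, τ ≠ (z : ℝ)) (k : ℕ) :
    (∀ n, PhatT τ (fun m => Bmat τ m k) n = if n = k then (1 : ℝ) else 0) ∧
    (∀ p : ℝ, 1 ≤ p → (fun m => Bmat τ m k) ∈ lpPhatSet τ p) := by
  have hτ' : ∀ z : ℤ, -τ ≠ (z : ℝ) := by
    intro z h
    exact hτ (-z) (by push_cast; linarith)
  have main : ∀ n, PhatT τ (fun m => Bmat τ m k) n = if n = k then (1 : ℝ) else 0 := by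
    intro n
    simp only [PhatT]
    by_cases hkn : k ≤ n
    · have hsub : Finset.Icc k n ⊆ Finset.range (n + 1) := by
        intro x hx
        rw [Finset.mem_Icc] at hx
        rw [Finset.mem_range]
        omega
      have hzero : ∀ x ∈ Finset.range (n + 1), x ∉ Finset.Icc k n →
          Phat τ n x * Bmat τ x k = 0 := by
        intro x hx hx'
        rw [Finset.mem_range] at hx
        rw [Finset.mem_Icc] at hx'
        have : Bmat τ x k = 0 := by rw [Bmat, if_neg (by omega)]
        rw [this, mul_zero]
      rw [← Finset.sum_subset hsub hzero]
      -- expand Phat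
      have e1 : ∑ m ∈ Finset.Icc k n, Phat τ n m * Bmat τ m k =
          ∑ m ∈ Finset.Icc k n, ∑ i ∈ Finset.Icc m n,
            (n.choose i : ℝ) * ((-1 : ℝ) ^ (i - m) * Ring.choose τ (i - m)) * Bmat τ m k := by
        refine Finset.sum_congr rfl fun m hm => ?_
        rw [Finset.mem_Icc] at hm
        rw [Phat_eq τ hτ hm.2, Finset.sum_mul]
      rw [e1, sum_Icc_Icc_comm]
      -- now inner over m ∈ Icc k i
      have e2 : ∀ i ∈ Finset.Icc k n,
          (∑ m ∈ Finset.Icc k i,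
            (n.choose i : ℝ) * ((-1 : ℝ) ^ (i - m) * Ring.choose τ (i - m)) * Bmat τ m k) =
          (n.choose i : ℝ) * ((-1 : ℝ) ^ (i - k) * (i.choose k : ℝ)) := by
        intro i hi
        rw [Finset.mem_Icc] at hi
        have e3 : ∀ m ∈ Finset.Icc k i,
            (n.choose i : ℝ) * ((-1 : ℝ) ^ (i - m) * Ring.choose τ (i - m)) * Bmat τ m k =
            ∑ j ∈ Finset.Icc k m,
              ((n.choose i : ℝ) * ((-1 : ℝ) ^ (j - k) * (j.choose k : ℝ))) *
                (((-1 : ℝ) ^ (i - m) * Ring.choose τ (i - m)) *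
                  ((-1 : ℝ) ^ (m - j) * Ring.choose (-τ) (m - j))) := by
          intro m hm
          rw [Finset.mem_Icc] at hm
          rw [Bmat_eq τ hτ' hm.1, Finset.mul_sum]
          refine Finset.sum_congr rfl fun j hj => ?_
          ring
        rw [Finset.sum_congr rfl e3,
          (sum_Icc_Icc_comm k i (fun j m =>
            ((n.choose i : ℝ) * ((-1 : ℝ) ^ (j - k) * (j.choose k : ℝ))) *
              (((-1 : ℝ) ^ (i - m) * Ring.choose τ (i - m)) *
                ((-1 : ℝ) ^ (m - j) * Ring.choose (-τ) (m - j))))).symm]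
        have e4 : ∀ j ∈ Finset.Icc k i,
            (∑ m ∈ Finset.Icc j i,
              ((n.choose i : ℝ) * ((-1 : ℝ) ^ (j - k) * (j.choose k : ℝ))) *
                (((-1 : ℝ) ^ (i - m) * Ring.choose τ (i - m)) *
                  ((-1 : ℝ) ^ (m - j) * Ring.choose (-τ) (m - j)))) =
            if i = j then (n.choose i : ℝ) * ((-1 : ℝ) ^ (j - k) * (j.choose k : ℝ)) else 0 := by
          intro j hj
          rw [Finset.mem_Icc] at hj
          rw [← Finset.mul_sum, inner_delta τ hj.2, mul_ite, mul_one, mul_zero]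
        rw [Finset.sum_congr rfl e4, Finset.sum_ite_eq (Finset.Icc k i) i
          (fun j => (n.choose i : ℝ) * ((-1 : ℝ) ^ (j - k) * (j.choose k : ℝ))),
          if_pos (Finset.mem_Icc.mpr ⟨hi.1, le_refl i⟩)]
      rw [Finset.sum_congr rfl e2, final_sum n k hkn]
    · rw [if_neg (by omega)]
      apply Finset.sum_eq_zero
      intro m hm
      rw [Finset.mem_range] at hm
      have : Bmat τ m k = 0 := by rw [Bmat, if_neg (by omega)]
      rw [this, mul_zero]
  refine ⟨main, fun p hp => ?_⟩
  apply summable_of_ne_finset_zero (s := {k})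
  intro n hn
  rw [Finset.mem_singleton] at hn
  rw [main n, if_neg hn, abs_zero, Real.zero_rpow (by linarith)]
end

section
/- An infinite real matrix A = (a_{nk}) maps ℓ_∞ into c — i.e., for every bounded real sequence x the series A_n(x) = Σ_k a_{nk} x_k converges absolutely for each n and the sequence (A_n(x))_n converges — if and only if (i) α_k := lim_{n→∞} a_{nk} exists for every k, (ii) sup_n Σ_k |a_{nk}| < ∞, and (iii) lim_{n→∞} Σ_k |a_{nk} − α_k| = 0. -/
open Finset Filter Topology

lemma mul_sign_eq_abs (r : ℝ) : r * Real.sign r = |r| := by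
  rcases lt_trichotomy r 0 with h|h|h
  · rw [Real.sign_of_neg h, abs_of_neg h]; ring
  · simp [h]
  · rw [Real.sign_of_pos h, abs_of_pos h]; ring

lemma abs_sign_le_one (r : ℝ) : |Real.sign r| ≤ 1 := by
  rcases lt_trichotomy r 0 with h|h|h
  · rw [Real.sign_of_neg h]; norm_num
  · simp [h]
  · rw [Real.sign_of_pos h]; norm_num

set_option maxHeartbeats 1000000 in
lemma schur_hump (c : ℕ → ℕ → ℝ) (ε : ℝ) (hε : 0 < ε)
    (hcsum : ∀ j, Summable fun k => |c j k|)
    (hcbig : ∀ j, ε ≤ ∑' k, |c j k|)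
    (hc0 : ∀ k, Tendsto (fun j => c j k) atTop (nhds 0))
    (hcx : ∀ x : ℕ → ℝ, (∀ k, |x k| ≤ 1) →
      Tendsto (fun j => ∑' k, c j k * x k) atTop (nhds 0)) :
    False := by
  have hε5 : 0 < ε / 5 := by positivity
  -- E2 : heads can be made small by choosing j late
  have E2 : ∀ K J : ℕ, ∃ j, J ≤ j ∧ ∑ k ∈ Finset.range K, |c j k| < ε / 5 := by
    intro K J
    have h1 : Tendsto (fun j => ∑ k ∈ Finset.range K, |c j k|) atTop (nhds 0) := by
      have := tendsto_finset_sum (Finset.range K) (fun k _ => (hc0 k).abs)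
      simpa using this
    have h2 := (h1.eventually_lt_const hε5).and (eventually_ge_atTop J)
    obtain ⟨j, hj1, hj2⟩ := h2.exists
    exact ⟨j, hj2, hj1⟩
  -- E1 : tails are small beyond some K
  have E1 : ∀ j Kp : ℕ, ∃ K, Kp < K ∧
      ∀ S : Finset ℕ, (∀ k ∈ S, K ≤ k) → ∑ k ∈ S, |c j k| ≤ ε / 5 := by
    intro j Kp
    have h1 : Tendsto (fun K => ∑ k ∈ Finset.range K, |c j k|) atTop
        (nhds (∑' k, |c j k|)) := (hcsum j).hasSum.tendsto_sum_nat
    have h2 : ∀ᶠ K in atTop, (∑' k, |c j k|) - ∑ k ∈ Finset.range K, |c j k| < ε / 5 := by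
      have h4 := h1.const_sub (∑' k, |c j k|)
      rw [sub_self] at h4
      exact h4.eventually_lt_const hε5
    obtain ⟨K, hK1, hK2⟩ := (h2.and (eventually_gt_atTop Kp)).exists
    refine ⟨K, hK2, fun S hS => ?_⟩
    have hdisj : Disjoint S (Finset.range K) := by
      rw [Finset.disjoint_left]
      intro k hk hk'
      exact absurd (Finset.mem_range.mp hk') (not_lt.mpr (hS k hk))
    have h3 : ∑ k ∈ S, |c j k| + ∑ k ∈ Finset.range K, |c j k| ≤ ∑' k, |c j k| := by
      rw [← Finset.sum_union hdisj]
      exact Summable.sum_le_tsum _ (fun k _ => abs_nonneg _) (hcsum j)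
    linarith
  choose jf hjfJ hjfhead using E2
  choose Kf hKfgt hKftail using E1
  -- the recursion
  obtain ⟨K, j, hK0, hj0, hKsucc, hjsucc⟩ :
      ∃ K j : ℕ → ℕ, K 0 = 0 ∧ j 0 = jf 0 0 ∧
        (∀ i, K (i + 1) = Kf (j i) (K i)) ∧
        (∀ i, j (i + 1) = jf (K (i + 1)) (j i + 1)) :=
    ⟨fun i => (Nat.rec ((0 : ℕ), jf 0 0)
        (fun _ q => (Kf q.2 q.1, jf (Kf q.2 q.1) (q.2 + 1))) i : ℕ × ℕ).1,
     fun i => (Nat.rec ((0 : ℕ), jf 0 0)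
        (fun _ q => (Kf q.2 q.1, jf (Kf q.2 q.1) (q.2 + 1))) i : ℕ × ℕ).2,
     rfl, rfl, fun i => rfl, fun i => rfl⟩
  have head : ∀ i, ∑ k ∈ Finset.range (K i), |c (j i) k| < ε / 5 := by
    intro i
    cases i with
    | zero => rw [hK0, hj0]; simpa using hjfhead 0 0
    | succ i => rw [hjsucc i]; exact hjfhead (K (i+1)) (j i + 1)
  have tail : ∀ i, ∀ S : Finset ℕ, (∀ k ∈ S, K (i+1) ≤ k) →
      ∑ k ∈ S, |c (j i) k| ≤ ε / 5 := by
    intro i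
    rw [hKsucc i]
    exact hKftail (j i) (K i)
  have hKlt : ∀ i, K i < K (i + 1) := by
    intro i; rw [hKsucc i]; exact hKfgt (j i) (K i)
  have hjlt : ∀ i, j i < j (i + 1) := by
    intro i; rw [hjsucc i]
    exact lt_of_lt_of_le (Nat.lt_succ_self _) (hjfJ (K (i+1)) (j i + 1))
  have hKmono : StrictMono K := strictMono_nat_of_lt_succ hKlt
  have hjmono : StrictMono j := strictMono_nat_of_lt_succ hjlt
  -- block index
  obtain ⟨I, hI⟩ : ∃ I : ℕ → ℕ, ∀ k, I k = Nat.findGreatest (fun i => K i ≤ k) k :=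
    ⟨_, fun k => rfl⟩
  have hI1 : ∀ k, K (I k) ≤ k := by
    intro k
    rw [hI k]
    exact Nat.findGreatest_spec (P := fun i => K i ≤ k) (Nat.zero_le k)
      (show K 0 ≤ k by rw [hK0]; exact Nat.zero_le k)
  have hI2 : ∀ k, k < K (I k + 1) := by
    intro k
    by_contra h
    push_neg at h
    have h1 : I k + 1 ≤ k := le_trans hKmono.le_apply h
    have h2 : I k + 1 ≤ Nat.findGreatest (fun i => K i ≤ k) k :=
      Nat.le_findGreatest (P := fun i => K i ≤ k) h1 h
    rw [← hI k] at h2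
    omega
  have hIuniq : ∀ i k, K i ≤ k → k < K (i + 1) → I k = i := by
    intro i k h1 h2
    have hik : i ≤ k := le_trans hKmono.le_apply h1
    have hge : i ≤ I k := by
      rw [hI k]; exact Nat.le_findGreatest (P := fun i => K i ≤ k) hik h1
    have hle : I k ≤ i := by
      by_contra h
      push_neg at h
      have : K (i + 1) ≤ K (I k) := hKmono.monotone h
      have := lt_of_lt_of_le h2 (le_trans this (hI1 k))
      omega
    omega
  obtain ⟨x, hxdef⟩ : ∃ x : ℕ → ℝ, ∀ k, x k = Real.sign (c (j (I k)) k) :=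
    ⟨_, fun k => rfl⟩
  have hx : ∀ k, |x k| ≤ 1 := fun k => by rw [hxdef k]; exact abs_sign_le_one _
  have key : ∀ i, ε / 5 ≤ ∑' k, c (j i) k * x k := by
    intro i
    obtain ⟨f, hf⟩ : ∃ f : ℕ → ℝ, ∀ k, f k = c (j i) k * x k := ⟨_, fun k => rfl⟩
    have hfabs : ∀ k, |f k| ≤ |c (j i) k| := by
      intro k
      rw [hf k, abs_mul]
      calc |c (j i) k| * |x k| ≤ |c (j i) k| * 1 :=
            mul_le_mul_of_nonneg_left (hx k) (abs_nonneg _)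
        _ = |c (j i) k| := mul_one _
    have hfs : Summable fun k => |f k| :=
      (hcsum (j i)).of_nonneg_of_le (fun k => abs_nonneg _) hfabs
    have hfsum : Summable f := Summable.of_abs hfs
    have split1 : ∑ k ∈ Finset.range (K (i+1)), f k + ∑' t, f (t + K (i+1)) = ∑' k, f k :=
      Summable.sum_add_tsum_nat_add (K (i+1)) hfsum
    have split2 : ∑ k ∈ Finset.Ico 0 (K i), f k + ∑ k ∈ Finset.Ico (K i) (K (i+1)), f k
        = ∑ k ∈ Finset.Ico 0 (K (i+1)), f k :=
      Finset.sum_Ico_consecutive f (Nat.zero_le _) (le_of_lt (hKlt i))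
    have split2' : ∑ k ∈ Finset.range (K i), f k + ∑ k ∈ Finset.Ico (K i) (K (i+1)), f k
        = ∑ k ∈ Finset.range (K (i+1)), f k := by
      simpa only [Finset.range_eq_Ico] using split2
    -- the middle block is a sum of absolute values
    have hmid : ∀ k ∈ Finset.Ico (K i) (K (i+1)), f k = |c (j i) k| := by
      intro k hk
      rw [Finset.mem_Ico] at hk
      have hIk : I k = i := hIuniq i k hk.1 hk.2
      rw [hf k, hxdef k, hIk]
      exact mul_sign_eq_abs _
    have hmideq : ∑ k ∈ Finset.Ico (K i) (K (i+1)), f k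
        = ∑ k ∈ Finset.Ico (K i) (K (i+1)), |c (j i) k| := Finset.sum_congr rfl hmid
    -- tail of |c J| is small
    have htails : Summable fun t => |c (j i) (t + K (i+1))| :=
      (summable_nat_add_iff (K (i+1))).2 (hcsum (j i))
    have htail1 : ∑' t, |c (j i) (t + K (i+1))| ≤ ε / 5 := by
      apply Summable.tsum_le_of_sum_le htails
      intro S
      have hinj : ∀ s ∈ S, ∀ t ∈ S, s + K (i+1) = t + K (i+1) → s = t := by
        intro s _ t _ h; omega
      rw [← Finset.sum_image (f := fun k => |c (j i) k|) hinj]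
      apply tail i
      intro k hk
      rw [Finset.mem_image] at hk
      obtain ⟨t, _, rfl⟩ := hk
      omega
    -- the middle block is large
    have habs_split : ∑ k ∈ Finset.range (K (i+1)), |c (j i) k| + ∑' t, |c (j i) (t + K (i+1))|
        = ∑' k, |c (j i) k| := Summable.sum_add_tsum_nat_add (K (i+1)) (hcsum (j i))
    have habs_split2 : ∑ k ∈ Finset.range (K i), |c (j i) k|
        + ∑ k ∈ Finset.Ico (K i) (K (i+1)), |c (j i) k|
        = ∑ k ∈ Finset.range (K (i+1)), |c (j i) k| := by
      simpa only [Finset.range_eq_Ico] using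
        Finset.sum_Ico_consecutive (fun k => |c (j i) k|) (Nat.zero_le (K i)) (le_of_lt (hKlt i))
    have hmidbig : ε - ε/5 - ε/5 ≤ ∑ k ∈ Finset.Ico (K i) (K (i+1)), |c (j i) k| := by
      have h1 := hcbig (j i)
      have h2 := head i
      linarith
    -- head of f is small
    have hheadf : -(ε/5) ≤ ∑ k ∈ Finset.range (K i), f k := by
      have h1 : |∑ k ∈ Finset.range (K i), f k| ≤ ∑ k ∈ Finset.range (K i), |f k| :=
        Finset.abs_sum_le_sum_abs _ _
      have h2 : ∑ k ∈ Finset.range (K i), |f k| ≤ ∑ k ∈ Finset.range (K i), |c (j i) k| :=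
        Finset.sum_le_sum (fun k _ => hfabs k)
      have h3 := head i
      have := abs_le.mp (le_of_lt (lt_of_le_of_lt (h1.trans h2) h3))
      linarith [this.1]
    -- tail of f is small
    have htailf : -(ε/5) ≤ ∑' t, f (t + K (i+1)) := by
      have hfts : Summable fun t => |f (t + K (i+1))| :=
        (summable_nat_add_iff (K (i+1))).2 hfs
      have h1 : |∑' t, f (t + K (i+1))| ≤ ∑' t, |f (t + K (i+1))| := by
        have := norm_tsum_le_tsum_norm (f := fun t => f (t + K (i+1)))
          (by simpa only [Real.norm_eq_abs] using hfts)
        simpa only [Real.norm_eq_abs] using this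
      have h2 : ∑' t, |f (t + K (i+1))| ≤ ∑' t, |c (j i) (t + K (i+1))| :=
        Summable.tsum_le_tsum (fun t => hfabs _) hfts htails
      have := abs_le.mp ((h1.trans h2).trans htail1)
      linarith [this.1]
    have hftsum : ∑' k, f k = ∑' k, c (j i) k * x k := tsum_congr hf
    linarith
  have htend : Tendsto (fun i => ∑' k, c (j i) k * x k) atTop (nhds 0) :=
    (hcx x hx).comp hjmono.tendsto_atTop
  have : ε / 5 ≤ 0 := ge_of_tendsto htend (Eventually.of_forall key)
  linarith


/-- a matrix `A` maps `ℓ_∞` into `c` iff the columns converge to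
limits `α_k`, the rows are uniformly absolutely summable, and
`Σ_k |a_{nk} − α_k| → 0` as `n → ∞`. -/
theorem matrix_linf_c (a : ℕ → ℕ → ℝ) :
    (∀ x : ℕ → ℝ, (∃ C : ℝ, ∀ k, |x k| ≤ C) →
      (∀ n, Summable fun k => |a n k * x k|) ∧
      ∃ L : ℝ, Filter.Tendsto (fun n => ∑' k, a n k * x k) Filter.atTop (nhds L)) ↔
    (∃ α : ℕ → ℝ,
      (∀ k, Filter.Tendsto (fun n => a n k) Filter.atTop (nhds (α k))) ∧
      (∃ C : ℝ, ∀ n, ∀ K : Finset ℕ, ∑ k ∈ K, |a n k| ≤ C) ∧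
      Filter.Tendsto (fun n => ∑' k, |a n k - α k|) Filter.atTop (nhds 0)) := by
  constructor
  · intro H
    -- rows are absolutely summable
    have hrow : ∀ n, Summable fun k => |a n k| := by
      have h1 := (H (fun _ => 1) ⟨1, fun k => by norm_num⟩).1
      intro n
      simpa using h1 n
    -- columns converge
    have hcol0 : ∀ k, ∃ L, Tendsto (fun n => a n k) atTop (nhds L) := by
      intro k
      obtain ⟨-, L, hL⟩ := H (fun j => if j = k then 1 else 0)
        ⟨1, fun j => by by_cases h : j = k <;> simp [h]⟩
      refine ⟨L, hL.congr fun n => ?_⟩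
      rw [tsum_eq_single k]
      · simp
      · intro j hj; simp [hj]
    choose α hα using hcol0
    -- diffs of rows summable
    have hds : ∀ n m, Summable fun k => |a n k - a m k| := fun n m =>
      ((hrow n).add (hrow m)).of_nonneg_of_le (fun k => abs_nonneg _)
        (fun k => abs_sub _ _)
    -- the rows form a Cauchy sequence in ℓ¹ (Schur)
    have cauchy : ∀ ε : ℝ, 0 < ε → ∃ N, ∀ m, N ≤ m → ∀ n, N ≤ n →
        ∑' k, |a n k - a m k| ≤ ε := by
      by_contra hcon
      push_neg at hcon
      obtain ⟨ε, hε, hcon⟩ := hcon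
      choose m hm n hn hbig using hcon
      refine schur_hump (fun N k => a (n N) k - a (m N) k) ε hε
        (fun N => hds (n N) (m N)) (fun N => le_of_lt (hbig N)) ?_ ?_
      · intro k
        have hnt : Tendsto n atTop atTop := tendsto_atTop_mono hn tendsto_id
        have hmt : Tendsto m atTop atTop := tendsto_atTop_mono hm tendsto_id
        have h1 : Tendsto (fun N => a (n N) k) atTop (nhds (α k)) := (hα k).comp hnt
        have h2 : Tendsto (fun N => a (m N) k) atTop (nhds (α k)) := (hα k).comp hmt
        simpa using h1.sub h2
      · intro x hx
        obtain ⟨hs, L, hL⟩ := H x ⟨1, hx⟩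
        have hsx : ∀ r, Summable fun k => a r k * x k := fun r => Summable.of_abs (hs r)
        have hnt : Tendsto n atTop atTop := tendsto_atTop_mono hn tendsto_id
        have hmt : Tendsto m atTop atTop := tendsto_atTop_mono hm tendsto_id
        have h1 : Tendsto (fun N => ∑' k, a (n N) k * x k) atTop (nhds L) := hL.comp hnt
        have h2 : Tendsto (fun N => ∑' k, a (m N) k * x k) atTop (nhds L) := hL.comp hmt
        have h3 := h1.sub h2
        rw [sub_self] at h3
        refine h3.congr fun N => ?_
        rw [← Summable.tsum_sub (hsx (n N)) (hsx (m N))]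
        refine tsum_congr fun k => ?_
        ring
    -- the row differences to the column limits
    have Δ : ∀ ε : ℝ, 0 < ε → ∃ N, ∀ n, N ≤ n →
        (Summable fun k => |a n k - α k|) ∧ ∑' k, |a n k - α k| ≤ ε := by
      intro ε hε
      obtain ⟨N, hN⟩ := cauchy ε hε
      refine ⟨N, fun n hn => ?_⟩
      have hfin : ∀ S : Finset ℕ, ∑ k ∈ S, |a n k - α k| ≤ ε := by
        intro S
        have h1 : Tendsto (fun m => ∑ k ∈ S, |a n k - a m k|) atTop
            (nhds (∑ k ∈ S, |a n k - α k|)) :=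
          tendsto_finset_sum _ fun k _ => (tendsto_const_nhds.sub (hα k)).abs
        apply le_of_tendsto h1
        filter_upwards [eventually_ge_atTop N] with m hm
        exact (Summable.sum_le_tsum S (fun k _ => abs_nonneg _) (hds n m)).trans (hN m hm n hn)
      have hsum : Summable fun k => |a n k - α k| :=
        summable_of_sum_range_le (fun _ => abs_nonneg _) (fun r => hfin _)
      exact ⟨hsum, Summable.tsum_le_of_sum_le hsum hfin⟩
    refine ⟨α, hα, ?_, ?_⟩
    · -- uniform bound
      obtain ⟨N, hΔ⟩ := Δ 1 one_pos
      have hαsum : Summable fun k => |α k| := by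
        apply (((hΔ N le_rfl).1).add (hrow N)).of_nonneg_of_le (fun _ => abs_nonneg _)
        intro k
        have h1 : |α k| = |(a N k - α k) - a N k| := by
          rw [show (a N k - α k) - a N k = -α k from by ring, abs_neg]
        rw [h1]
        exact abs_sub _ _
      refine ⟨(∑ r ∈ Finset.range N, ∑' k, |a r k|) + (1 + ∑' k, |α k|), ?_⟩
      intro n S
      by_cases hn : N ≤ n
      · have h1 : ∑ k ∈ S, |a n k| ≤ ∑ k ∈ S, |a n k - α k| + ∑ k ∈ S, |α k| := by
          rw [← Finset.sum_add_distrib]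
          refine Finset.sum_le_sum fun k _ => ?_
          have h2 : |a n k| = |(a n k - α k) + α k| := by rw [sub_add_cancel]
          rw [h2]
          exact abs_add_le _ _
        have h2 : ∑ k ∈ S, |a n k - α k| ≤ 1 :=
          (Summable.sum_le_tsum S (fun _ _ => abs_nonneg _) (hΔ n hn).1).trans (hΔ n hn).2
        have h3 : ∑ k ∈ S, |α k| ≤ ∑' k, |α k| :=
          Summable.sum_le_tsum S (fun _ _ => abs_nonneg _) hαsum
        have h4 : 0 ≤ ∑ r ∈ Finset.range N, ∑' k, |a r k| :=
          Finset.sum_nonneg fun r _ => tsum_nonneg fun k => abs_nonneg _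
        linarith
      · push_neg at hn
        have h1 : ∑ k ∈ S, |a n k| ≤ ∑' k, |a n k| :=
          Summable.sum_le_tsum S (fun _ _ => abs_nonneg _) (hrow n)
        have h2 : ∑' k, |a n k| ≤ ∑ r ∈ Finset.range N, ∑' k, |a r k| :=
          Finset.single_le_sum (f := fun r => ∑' k, |a r k|)
            (fun r _ => tsum_nonneg fun k => abs_nonneg _) (Finset.mem_range.mpr hn)
        have h3 : (0:ℝ) ≤ ∑' k, |α k| := tsum_nonneg fun k => abs_nonneg _
        linarith
    · -- tendsto 0
      rw [Metric.tendsto_atTop]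
      intro ε hε
      obtain ⟨N, hΔ⟩ := Δ (ε/2) (by positivity)
      refine ⟨N, fun n hn => ?_⟩
      rw [Real.dist_eq, sub_zero, abs_of_nonneg (tsum_nonneg fun _ => abs_nonneg _)]
      have := (hΔ n hn).2
      linarith
  · rintro ⟨α, hcol, ⟨C, hC⟩, ht⟩
    have hrow : ∀ n, Summable fun k => |a n k| := fun n =>
      summable_of_sum_range_le (fun k => abs_nonneg _) (fun m => hC n (Finset.range m))
    have hα : Summable fun k => |α k| := by
      apply summable_of_sum_range_le (fun k => abs_nonneg _) (c := C)
      intro m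
      have h1 : Tendsto (fun n => ∑ k ∈ Finset.range m, |a n k|) atTop
          (nhds (∑ k ∈ Finset.range m, |α k|)) :=
        tendsto_finset_sum _ fun k _ => (hcol k).abs
      exact le_of_tendsto h1 (Eventually.of_forall fun n => hC n _)
    have hdiff : ∀ n, Summable fun k => |a n k - α k| := fun n =>
      ((hrow n).add hα).of_nonneg_of_le (fun k => abs_nonneg _)
        (fun k => (abs_sub _ _))
    intro x ⟨Cx, hx⟩
    have hCx : 0 ≤ Cx := le_trans (abs_nonneg _) (hx 0)
    have hsum : ∀ n, Summable fun k => |a n k * x k| := by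
      intro n
      apply ((hrow n).mul_right Cx).of_nonneg_of_le (fun k => abs_nonneg _)
      intro k
      rw [abs_mul]
      exact mul_le_mul_of_nonneg_left (hx k) (abs_nonneg _)
    refine ⟨hsum, ⟨∑' k, α k * x k, ?_⟩⟩
    have hαx : Summable fun k => α k * x k := by
      apply Summable.of_abs
      apply (hα.mul_right Cx).of_nonneg_of_le (fun k => abs_nonneg _)
      intro k; rw [abs_mul]; exact mul_le_mul_of_nonneg_left (hx k) (abs_nonneg _)
    have hsub : ∀ n, Summable fun k => |a n k * x k - α k * x k| := by
      intro n
      exact ((hsum n).add (hαx.abs)).of_nonneg_of_le (fun k => abs_nonneg _)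
        (fun k => abs_sub _ _)
    have key : ∀ n, |∑' k, a n k * x k - ∑' k, α k * x k| ≤ Cx * ∑' k, |a n k - α k| := by
      intro n
      rw [← Summable.tsum_sub (Summable.of_abs (hsum n)) hαx]
      have h1 : |∑' k, (a n k * x k - α k * x k)| ≤ ∑' k, |a n k * x k - α k * x k| := by
        have := norm_tsum_le_tsum_norm (f := fun k => a n k * x k - α k * x k)
          (by simpa only [Real.norm_eq_abs] using hsub n)
        simpa only [Real.norm_eq_abs] using this
      refine h1.trans ?_
      have h2 : ∑' k, |a n k * x k - α k * x k| ≤ ∑' k, |a n k - α k| * Cx := by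
        apply Summable.tsum_le_tsum _ (hsub n) ((hdiff n).mul_right Cx)
        intro k
        rw [← sub_mul, abs_mul]
        exact mul_le_mul_of_nonneg_left (hx k) (abs_nonneg _)
      refine h2.trans ?_
      rw [tsum_mul_right, mul_comm]
    have h3 : Tendsto (fun n => ∑' k, a n k * x k - ∑' k, α k * x k) atTop (nhds 0) := by
      apply squeeze_zero_norm (fun n => key n)
      simpa using ht.const_mul Cx
    have := h3.add_const (∑' k, α k * x k)
    simpa using this
end
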